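/- For n ≥ 1, the signed count over all overpartitions π of n that contain at least one overlined part, weighted by (-1)^{ℓ_{N<O}(π)}, equals p(n), the number of ordinary partitions of n. Here ℓ_{N<O}(π) is the number of non-overlined parts of π of size strictly less than the size of the largest overlined part of π. -/

import Mathlib

/-!
Let `L` be the largest overlined part and `m` the largest part size below `L`, if there is one.
Changing whether `m` is overlined (un-overlining it, or overlining one plain copy of it) keeps `L`
and the set of part sizes, so it is an involution; it changes `ℓ_{N<O}` by one, so these
overpartitions cancel in pairs. The fixed points have `L` as their only overlined part and no part
below `L`: they are the partitions of `n` with one copy of the smallest part overlined, and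
contribute `+1` each.
-/

open scoped Classical

/-- An overpartition of `n`: a finite set of overlined part sizes (the first
occurrence of a size may be overlined, so overlined parts are distinct)
together with a multiset of non-overlined parts, all parts positive,
with total sum `n`. -/
structure Overpartition (n : ℕ) where
  overs : Finset ℕ
  plain : Multiset ℕ
  over_pos : ∀ x ∈ overs, 0 < x
  plain_pos : ∀ x ∈ plain, 0 < x
  sum_eq : (∑ x ∈ overs, x) + plain.sum = n

theorem Function.Involutive.card_sub_card_eq_card_fixed {α : Type*} [Finite α] {S P : α → Prop}
    {f : α → α} (hf : Function.Involutive f) (hS : ∀ x, S x → S (f x))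
    (hP : ∀ x, S x → f x ≠ x → (P (f x) ↔ ¬ P x))
    (hfix : ∀ x, S x → f x = x → P x) :
    (Nat.card {x // S x ∧ P x} : ℤ) - Nat.card {x // S x ∧ ¬ P x} =
      Nat.card {x // S x ∧ f x = x} := by
  have := Fintype.ofFinite α
  simp only [Nat.card_eq_fintype_card, Fintype.card_subtype]
  have hsplit := Finset.card_filter_add_card_filter_not
    (s := Finset.univ.filter fun x => S x ∧ P x) (fun x => f x = x)
  have hfixed : (Finset.univ.filter fun x => S x ∧ P x).filter (fun x => f x = x) =
      Finset.univ.filter fun x => S x ∧ f x = x := by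
    ext x
    simp only [Finset.mem_filter, Finset.mem_univ, true_and]
    exact ⟨fun h => ⟨h.1.1, h.2⟩, fun h => ⟨⟨h.1, hfix x h.1 h.2⟩, h.2⟩⟩
  have hpaired : ((Finset.univ.filter fun x => S x ∧ P x).filter fun x => f x ≠ x).card =
      (Finset.univ.filter fun x => S x ∧ ¬ P x).card := by
    refine Finset.card_nbij' f f ?_ ?_ (fun x _ => hf x) (fun x _ => hf x) <;> intro x hx <;>
      simp only [Finset.coe_filter, Finset.mem_filter, Finset.mem_univ, true_and,
        Set.mem_ofPred_eq] at hx ⊢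
    · exact ⟨hS x hx.1.1, fun h => (hP x hx.1.1 hx.2).1 h hx.1.2⟩
    · have hfx : f x ≠ x := fun h => hx.2 (hfix x hx.1 h)
      exact ⟨⟨hS x hx.1, (hP x hx.1 hfx).2 hx.2⟩, by rw [hf x]; exact hfx.symm⟩
  rw [← hsplit, hfixed, hpaired]
  push_cast
  ring

theorem Nat.Partition.parts_ne_zero_of_pos {n : ℕ} (hn : 0 < n) (p : n.Partition) :
    p.parts ≠ 0 :=
  fun h => hn.ne (by rw [← p.parts_sum, h, Multiset.sum_zero])

namespace Overpartition

variable {n : ℕ}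

@[ext]
theorem ext {π σ : Overpartition n} (ho : π.overs = σ.overs) (hp : π.plain = σ.plain) :
    π = σ := by
  cases π; cases σ; simp_all

theorem le_of_mem_overs {π : Overpartition n} {x : ℕ} (hx : x ∈ π.overs) : x ≤ n := by
  have := Finset.single_le_sum (f := fun x => x) (fun _ _ => Nat.zero_le _) hx
  have := π.sum_eq
  omega

def toPartition (π : Overpartition n) : n.Partition where
  parts := π.overs.val + π.plain
  parts_pos hx := (Multiset.mem_add.1 hx).elim (π.over_pos _) (π.plain_pos _)
  parts_sum := by
    have h := π.sum_eq
    rwa [Finset.sum_eq_multiset_sum, Multiset.map_id', ← Multiset.sum_add] at h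

instance : Finite (Overpartition n) :=
  Finite.of_injective (fun π => (π.toPartition, (⟨π.overs, Finset.mem_powerset.2 fun _ hx =>
      Finset.mem_range_succ_iff.2 (le_of_mem_overs hx)⟩ : (Finset.range (n + 1)).powerset)))
    fun π σ h => by
      simp only [Prod.mk.injEq, Subtype.mk.injEq, Nat.Partition.ext_iff, toPartition] at h
      obtain ⟨hp, ho⟩ := h
      rw [ho] at hp
      exact ext ho (add_left_cancel hp)

def maxOver (π : Overpartition n) : ℕ := π.overs.sup id

def sizes (π : Overpartition n) : Finset ℕ := π.overs ∪ π.plain.toFinset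

def sizesBelowMaxOver (π : Overpartition n) : Finset ℕ := π.sizes.filter (· < π.maxOver)

def numPlainBelowMaxOver (π : Overpartition n) : ℕ :=
  Multiset.card (π.plain.filter (· < π.maxOver))

variable {π : Overpartition n} {m : ℕ}

theorem exists_mem_overs_lt_iff {x : ℕ} : (∃ y ∈ π.overs, x < y) ↔ x < π.maxOver :=
  Finset.lt_sup_iff.symm

theorem overs_nonempty_iff_pos_maxOver : π.overs.Nonempty ↔ 0 < π.maxOver := by
  rw [← exists_mem_overs_lt_iff]
  exact ⟨fun ⟨x, hx⟩ => ⟨x, hx, π.over_pos x hx⟩, fun ⟨x, hx, _⟩ => ⟨x, hx⟩⟩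

theorem card_filter_exists_mem_overs_lt :
    Multiset.card (π.plain.filter fun x => ∃ y ∈ π.overs, x < y) =
      π.numPlainBelowMaxOver := by
  simp only [exists_mem_overs_lt_iff, numPlainBelowMaxOver]

theorem mem_plain_of_mem_sizes (hm : m ∈ π.sizes) (ho : m ∉ π.overs) : m ∈ π.plain := by
  simpa [sizes, ho] using hm

def unoverline (π : Overpartition n) (m : ℕ) (hm : m ∈ π.overs) : Overpartition n where
  overs := π.overs.erase m
  plain := m ::ₘ π.plain
  over_pos x hx := π.over_pos x (Finset.mem_of_mem_erase hx)
  plain_pos x hx := (Multiset.mem_cons.1 hx).elim (fun h => h ▸ π.over_pos m hm) (π.plain_pos x)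
  sum_eq := by
    have := Finset.add_sum_erase π.overs (fun x => x) hm
    rw [Multiset.sum_cons]
    linarith [π.sum_eq]

def overline (π : Overpartition n) (m : ℕ) (hm : m ∈ π.plain) (ho : m ∉ π.overs) :
    Overpartition n where
  overs := insert m π.overs
  plain := π.plain.erase m
  over_pos x hx := (Finset.mem_insert.1 hx).elim (fun h => h ▸ π.plain_pos m hm) (π.over_pos x)
  plain_pos x hx := π.plain_pos x (Multiset.mem_of_mem_erase hx)
  sum_eq := by
    have := Multiset.sum_erase hm
    rw [Finset.sum_insert ho]
    linarith [π.sum_eq]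

def toggleAt (π : Overpartition n) (m : ℕ) : Overpartition n :=
  if ho : m ∈ π.overs then π.unoverline m ho
  else if hp : m ∈ π.plain then π.overline m hp ho
  else π

theorem toggleAt_of_mem_overs (ho : m ∈ π.overs) : π.toggleAt m = π.unoverline m ho :=
  dif_pos ho

theorem toggleAt_of_mem_plain (hp : m ∈ π.plain) (ho : m ∉ π.overs) :
    π.toggleAt m = π.overline m hp ho := by
  rw [toggleAt, dif_neg ho, dif_pos hp]

theorem sizes_toggleAt (hm : m ∈ π.sizes) : (π.toggleAt m).sizes = π.sizes := by
  by_cases ho : m ∈ π.overs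
  · rw [toggleAt_of_mem_overs ho]
    ext x
    by_cases hxm : x = m
    · simp [sizes, unoverline, hxm, ho]
    · simp [sizes, unoverline, hxm]
  · have hp := mem_plain_of_mem_sizes hm ho
    rw [toggleAt_of_mem_plain hp ho]
    ext x
    by_cases hxm : x = m
    · simp [sizes, overline, hxm, hp]
    · simp [sizes, overline, hxm, Multiset.mem_erase_of_ne hxm]

theorem maxOver_toggleAt (h : m < π.maxOver) : (π.toggleAt m).maxOver = π.maxOver := by
  by_cases ho : m ∈ π.overs
  · rw [toggleAt_of_mem_overs ho]
    obtain ⟨L, hL, hLmax⟩ := Finset.exists_mem_eq_sup π.overs ⟨m, ho⟩ id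
    refine le_antisymm (Finset.sup_mono (Finset.erase_subset m π.overs)) ?_
    rw [maxOver, hLmax]
    exact Finset.le_sup (f := id) (Finset.mem_erase.2 ⟨(h.trans_eq hLmax).ne', hL⟩)
  · by_cases hp : m ∈ π.plain
    · rw [toggleAt_of_mem_plain hp ho]
      exact (Finset.sup_insert (f := id)).trans (sup_of_le_right h.le)
    · rw [toggleAt, dif_neg ho, dif_neg hp]

theorem even_numPlainBelowMaxOver_toggleAt (hm : m ∈ π.sizes) (h : m < π.maxOver) :
    Even (π.toggleAt m).numPlainBelowMaxOver ↔ ¬ Even π.numPlainBelowMaxOver := by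
  rw [numPlainBelowMaxOver, numPlainBelowMaxOver, maxOver_toggleAt h]
  by_cases ho : m ∈ π.overs
  · rw [toggleAt_of_mem_overs ho]
    dsimp only [unoverline]
    rw [Multiset.filter_cons_of_pos (p := (· < π.maxOver)) _ h, Multiset.card_cons,
      Nat.even_add_one]
  · have hp := mem_plain_of_mem_sizes hm ho
    rw [toggleAt_of_mem_plain hp ho]
    dsimp only [overline]
    conv_rhs => rw [← Multiset.cons_erase hp,
      Multiset.filter_cons_of_pos (p := (· < π.maxOver)) _ h, Multiset.card_cons,
      Nat.even_add_one, not_not]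

theorem toggleAt_toggleAt (hm : m ∈ π.sizes) : (π.toggleAt m).toggleAt m = π := by
  by_cases ho : m ∈ π.overs
  · rw [toggleAt_of_mem_overs ho, toggleAt_of_mem_plain (Multiset.mem_cons_self m π.plain)
      (Finset.notMem_erase m π.overs)]
    ext1
    · exact Finset.insert_erase ho
    · exact Multiset.erase_cons_head m π.plain
  · have hp := mem_plain_of_mem_sizes hm ho
    rw [toggleAt_of_mem_plain hp ho, toggleAt_of_mem_overs (Finset.mem_insert_self m π.overs)]
    ext1
    · exact Finset.erase_insert ho
    · exact Multiset.cons_erase hp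

theorem sizesBelowMaxOver_toggleAt (hm : m ∈ π.sizesBelowMaxOver) :
    (π.toggleAt m).sizesBelowMaxOver = π.sizesBelowMaxOver := by
  rw [sizesBelowMaxOver, Finset.mem_filter] at hm
  rw [sizesBelowMaxOver, sizesBelowMaxOver, sizes_toggleAt hm.1, maxOver_toggleAt hm.2]

def toggle (π : Overpartition n) : Overpartition n :=
  if h : π.sizesBelowMaxOver.Nonempty then π.toggleAt (π.sizesBelowMaxOver.max' h) else π

theorem toggle_of_nonempty (h : π.sizesBelowMaxOver.Nonempty) :
    π.toggle = π.toggleAt (π.sizesBelowMaxOver.max' h) :=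
  dif_pos h

theorem toggle_of_eq_empty (h : π.sizesBelowMaxOver = ∅) : π.toggle = π :=
  dif_neg (Finset.not_nonempty_iff_eq_empty.2 h)

theorem toggle_involutive : Function.Involutive (toggle (n := n)) := by
  intro π
  by_cases h : π.sizesBelowMaxOver.Nonempty
  · have hm := Finset.max'_mem _ h
    have hs := sizesBelowMaxOver_toggleAt hm
    rw [toggle_of_nonempty h, toggle_of_nonempty (by rwa [hs])]
    simp only [hs]
    exact toggleAt_toggleAt (Finset.mem_filter.1 hm).1
  · have h' := Finset.not_nonempty_iff_eq_empty.1 h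
    rw [toggle_of_eq_empty h', toggle_of_eq_empty h']

theorem maxOver_toggle : π.toggle.maxOver = π.maxOver := by
  by_cases h : π.sizesBelowMaxOver.Nonempty
  · rw [toggle_of_nonempty h]
    exact maxOver_toggleAt (Finset.mem_filter.1 (Finset.max'_mem _ h)).2
  · rw [toggle_of_eq_empty (Finset.not_nonempty_iff_eq_empty.1 h)]

theorem overs_nonempty_toggle (h : π.overs.Nonempty) : π.toggle.overs.Nonempty := by
  rwa [overs_nonempty_iff_pos_maxOver, maxOver_toggle, ← overs_nonempty_iff_pos_maxOver]

theorem even_numPlainBelowMaxOver_toggle (h : π.sizesBelowMaxOver.Nonempty) :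
    Even π.toggle.numPlainBelowMaxOver ↔ ¬ Even π.numPlainBelowMaxOver := by
  have hm := Finset.mem_filter.1 (Finset.max'_mem _ h)
  rw [toggle_of_nonempty h]
  exact even_numPlainBelowMaxOver_toggleAt hm.1 hm.2

theorem toggle_eq_self_iff : π.toggle = π ↔ π.sizesBelowMaxOver = ∅ := by
  refine ⟨fun h => ?_, toggle_of_eq_empty⟩
  by_contra hne
  have := even_numPlainBelowMaxOver_toggle (Finset.nonempty_iff_ne_empty.2 hne)
  rw [h] at this
  exact iff_not_self this

theorem even_numPlainBelowMaxOver_toggle_of_ne (h : π.toggle ≠ π) :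
    Even π.toggle.numPlainBelowMaxOver ↔ ¬ Even π.numPlainBelowMaxOver :=
  even_numPlainBelowMaxOver_toggle (Finset.nonempty_iff_ne_empty.2 (mt toggle_eq_self_iff.2 h))

theorem maxOver_le_of_mem_sizes (h : π.sizesBelowMaxOver = ∅) {x : ℕ} (hx : x ∈ π.sizes) :
    π.maxOver ≤ x := by
  by_contra hlt
  have : x ∈ π.sizesBelowMaxOver := Finset.mem_filter.2 ⟨hx, not_le.1 hlt⟩
  simp [h] at this

theorem overs_eq_singleton_maxOver (hne : π.overs.Nonempty) (h : π.sizesBelowMaxOver = ∅) :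
    π.overs = {π.maxOver} := by
  refine hne.subset_singleton_iff.1 fun x hx => Finset.mem_singleton.2 (le_antisymm ?_ ?_)
  · exact Finset.le_sup (f := id) hx
  · exact maxOver_le_of_mem_sizes h (Finset.mem_union_left _ hx)

theorem even_numPlainBelowMaxOver_of_toggle_eq_self (h : π.toggle = π) :
    Even π.numPlainBelowMaxOver := by
  rw [numPlainBelowMaxOver, Multiset.card_eq_zero.2 (Multiset.filter_eq_nil.2 fun x hx =>
    not_lt.2 (maxOver_le_of_mem_sizes (toggle_eq_self_iff.1 h)
      (Finset.mem_union_right _ (Multiset.mem_toFinset.2 hx))))]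
  exact Even.zero

def ofPartition (p : n.Partition) (hp : p.parts ≠ 0) : Overpartition n where
  overs := {p.parts.toFinset.min' (Multiset.toFinset_nonempty.2 hp)}
  plain := p.parts.erase (p.parts.toFinset.min' (Multiset.toFinset_nonempty.2 hp))
  over_pos x hx := p.parts_pos (by
    rw [Finset.mem_singleton.1 hx, ← Multiset.mem_toFinset]
    exact Finset.min'_mem _ _)
  plain_pos x hx := p.parts_pos (Multiset.mem_of_mem_erase hx)
  sum_eq := by
    rw [Finset.sum_singleton, Multiset.sum_erase (Multiset.mem_toFinset.1 (Finset.min'_mem _ _)),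
      p.parts_sum]

section ofPartition

variable (p : n.Partition) (hp : p.parts ≠ 0)

theorem maxOver_ofPartition :
    (ofPartition p hp).maxOver = p.parts.toFinset.min' (Multiset.toFinset_nonempty.2 hp) :=
  Finset.sup_singleton

theorem sizesBelowMaxOver_ofPartition : (ofPartition p hp).sizesBelowMaxOver = ∅ := by
  refine Finset.filter_false_of_mem fun x hx => not_lt.2 ?_
  rw [maxOver_ofPartition]
  refine Finset.min'_le _ _ (Multiset.mem_toFinset.2 ?_)
  simp only [sizes, ofPartition, Finset.mem_union, Finset.mem_singleton,
    Multiset.mem_toFinset] at hx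
  rcases hx with rfl | hx
  · exact Multiset.mem_toFinset.1 (Finset.min'_mem _ _)
  · exact Multiset.mem_of_mem_erase hx

theorem toPartition_ofPartition : (ofPartition p hp).toPartition = p := by
  ext1
  exact Multiset.cons_erase (Multiset.mem_toFinset.1 (Finset.min'_mem _ _))

end ofPartition

theorem ofPartition_toPartition (hne : π.overs.Nonempty) (h : π.sizesBelowMaxOver = ∅)
    (hp : π.toPartition.parts ≠ 0) : ofPartition π.toPartition hp = π := by
  have ho := overs_eq_singleton_maxOver hne h
  have hparts : π.toPartition.parts = π.maxOver ::ₘ π.plain := by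
    change π.overs.val + π.plain = _
    rw [ho]
    rfl
  have hmin :
      π.toPartition.parts.toFinset.min' (Multiset.toFinset_nonempty.2 hp) = π.maxOver := by
    refine le_antisymm (Finset.min'_le _ _ (by simp [hparts])) (Finset.le_min' _ _ _ fun x hx => ?_)
    rw [Multiset.mem_toFinset, hparts, Multiset.mem_cons] at hx
    rcases hx with rfl | hx
    · exact le_rfl
    · exact maxOver_le_of_mem_sizes h (Finset.mem_union_right _ (Multiset.mem_toFinset.2 hx))
  ext1
  · change {_} = π.overs
    rw [hmin, ho]
  · change π.toPartition.parts.erase _ = π.plain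
    rw [hmin, hparts, Multiset.erase_cons_head]

def fixedPointsEquivPartition (hn : 0 < n) :
    {π : Overpartition n // π.overs.Nonempty ∧ π.toggle = π} ≃ n.Partition where
  toFun π := π.1.toPartition
  invFun p := ⟨ofPartition p (p.parts_ne_zero_of_pos hn), Finset.singleton_nonempty _,
    toggle_of_eq_empty (sizesBelowMaxOver_ofPartition _ _)⟩
  left_inv π := Subtype.ext <| ofPartition_toPartition π.2.1 (toggle_eq_self_iff.1 π.2.2)
    (Nat.Partition.parts_ne_zero_of_pos hn _)
  right_inv p := toPartition_ofPartition p (p.parts_ne_zero_of_pos hn)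

end Overpartition

theorem stmt_3 (n : ℕ) (hn : 1 ≤ n) :
    (Nat.card {π : Overpartition n // π.overs.Nonempty ∧
        Even (Multiset.card (π.plain.filter (fun x => ∃ y ∈ π.overs, x < y)))} : ℤ) -
      Nat.card {π : Overpartition n // π.overs.Nonempty ∧
        Odd (Multiset.card (π.plain.filter (fun x => ∃ y ∈ π.overs, x < y)))} =
    Nat.card (Nat.Partition n) := by
  simp only [Overpartition.card_filter_exists_mem_overs_lt, ← Nat.not_even_iff_odd]
  rw [Overpartition.toggle_involutive.card_sub_card_eq_card_fixed]
  · exact_mod_cast Nat.card_congr (Overpartition.fixedPointsEquivPartition hn)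
  · exact fun _ => Overpartition.overs_nonempty_toggle
  · exact fun _ _ => Overpartition.even_numPlainBelowMaxOver_toggle_of_ne
  · exact fun _ _ => Overpartition.even_numPlainBelowMaxOver_of_toggle_eq_self
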